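/- arXiv:1405.6905 — 3 statements merged into one kernel-verified Lean document; each statement's English description precedes it below -/
import Mathlib

section
/- Let T be a real n×n matrix and let |T| denote the matrix of entrywise absolute values of T. If the spectral radius of |T| is strictly less than 1, then there exists a vector M ∈ ℝⁿ with all entries strictly positive such that every entry of (I − |T|ᵀ)·M is strictly positive. -/
/-!
Put `B = |T|ᵀ`, a nonnegative matrix with `ρ(B) = ρ(|T|) < 1`. By Gelfand's formula some power
`B ^ k`, `k ≥ 1`, has `ℓ^∞`-operator norm below `1`, i.e. all its row sums are `< 1`. The vector
`M = (I + B + ⋯ + B ^ (k-1)) 𝟙` is then `≥ 𝟙`, and `(I - B) M = 𝟙 - B ^ k 𝟙` is positive.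
-/

open Filter Matrix

attribute [local instance] Matrix.linftyOpSeminormedAddCommGroup Matrix.linftyOpNormedRing
  Matrix.linftyOpNormedAlgebra

theorem spectrum.eventually_nnnorm_pow_lt_one {A : Type*} [NormedRing A] [NormedAlgebra ℂ A]
    [CompleteSpace A] {a : A} (ha : spectralRadius ℂ a < 1) : ∀ᶠ k in atTop, ‖a ^ k‖₊ < 1 := by
  filter_upwards [(pow_nnnorm_pow_one_div_tendsto_nhds_spectralRadius a).eventually_lt_const ha,
    eventually_gt_atTop 0] with k hk hk0
  by_contra! h
  exact (ENNReal.one_le_rpow (by exact_mod_cast h) (by positivity)).not_gt hk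

namespace Matrix

variable {ι : Type*} [Fintype ι] [DecidableEq ι]

theorem spectrum_transpose {K : Type*} [Field K] (A : Matrix ι ι K) :
    spectrum K Aᵀ = spectrum K A := by
  ext
  simp only [mem_spectrum_iff_isRoot_charpoly, charpoly_transpose]

theorem spectralRadius_transpose {K : Type*} [NormedField K] (A : Matrix ι ι K) :
    spectralRadius K Aᵀ = spectralRadius K A := by
  rw [spectralRadius, spectrum_transpose, spectralRadius]

theorem sum_norm_apply_le_linfty_opNorm {m n α : Type*} [Fintype m] [Fintype n]
    [SeminormedAddCommGroup α] (A : Matrix m n α) (i : m) : ∑ j, ‖A i j‖ ≤ ‖A‖ := by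
  rw [linfty_opNorm_def]
  simpa only [NNReal.coe_sum, coe_nnnorm] using
    NNReal.coe_le_coe.mpr (Finset.le_sup (f := fun i => ∑ j, ‖A i j‖₊) (Finset.mem_univ i))

theorem exists_pos_one_sub_mulVec_pos {R : Type*} [CommRing R] [LinearOrder R]
    [IsStrictOrderedRing R] {B : Matrix ι ι R} (hB : ∀ i j, 0 ≤ B i j) {k : ℕ} (hk : k ≠ 0)
    (hrow : ∀ i, ∑ j, (B ^ k) i j < 1) :
    ∃ M : ι → R, (∀ i, 0 < M i) ∧ ∀ i, 0 < ((1 - B) *ᵥ M) i := by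
  have row_sum : ∀ (C : Matrix ι ι R) i, (C *ᵥ 1) i = ∑ j, C i j := fun C i => by
    simp [mulVec, dotProduct]
  refine ⟨(∑ l ∈ Finset.range k, B ^ l) *ᵥ 1, fun i => ?_, fun i => ?_⟩
  · rw [sum_mulVec, Finset.sum_apply]
    calc (0 : R) < ((B ^ 0) *ᵥ 1) i := by simp
      _ ≤ ∑ l ∈ Finset.range k, ((B ^ l) *ᵥ 1) i :=
        Finset.single_le_sum (f := fun l => ((B ^ l) *ᵥ 1) i) (fun l _ => by
          rw [row_sum]; exact Finset.sum_nonneg fun j _ => pow_apply_nonneg hB l i j)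
          (Finset.mem_range.mpr (Nat.pos_of_ne_zero hk))
  · rw [mulVec_mulVec, mul_neg_geom_sum, sub_mulVec, one_mulVec, Pi.sub_apply, row_sum]
    simpa using hrow i

theorem exists_pow_row_sum_lt_one {B : Matrix ι ι ℝ} (hB : ∀ i j, 0 ≤ B i j)
    (hρ : spectralRadius ℂ (B.map Complex.ofReal) < 1) :
    ∃ k ≠ 0, ∀ i, ∑ j, (B ^ k) i j < 1 := by
  obtain ⟨k, hk, hk0⟩ :=
    ((spectrum.eventually_nnnorm_pow_lt_one hρ).and (eventually_ne_atTop 0)).exists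
  have hpow : (B.map Complex.ofReal) ^ k = (B ^ k).map Complex.ofReal :=
    (map_pow (Complex.ofRealHom.mapMatrix : Matrix ι ι ℝ →+* Matrix ι ι ℂ) B k).symm
  refine ⟨k, hk0, fun i => ?_⟩
  calc ∑ j, (B ^ k) i j = ∑ j, ‖((B.map Complex.ofReal) ^ k) i j‖ := by
        simp [hpow, abs_of_nonneg (pow_apply_nonneg hB k i _)]
    _ ≤ ‖(B.map Complex.ofReal) ^ k‖ := sum_norm_apply_le_linfty_opNorm _ i
    _ < 1 := hk

end Matrix

/-- If the spectral radius of the entrywise absolute value `|T|` of a real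
`n × n` matrix `T` is strictly less than `1`, then there is an entrywise strictly positive
vector `M` such that `(I - |T|ᵀ) *ᵥ M` is entrywise strictly positive. -/
theorem stmt0 (n : ℕ) (T : Matrix (Fin n) (Fin n) ℝ)
    (h : spectralRadius ℂ ((T.map fun x => |x|).map Complex.ofReal) < 1) :
    ∃ M : Fin n → ℝ, (∀ i, 0 < M i) ∧
      ∀ i, 0 < (((1 : Matrix (Fin n) (Fin n) ℝ) - (T.map fun x => |x|)ᵀ) *ᵥ M) i := by
  have hB : ∀ i j, 0 ≤ (T.map fun x => |x|)ᵀ i j := fun i j => abs_nonneg _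
  rw [← spectralRadius_transpose, ← transpose_map] at h
  obtain ⟨k, hk0, hrow⟩ := exists_pow_row_sum_lt_one hB h
  exact exists_pos_one_sub_mulVec_pos hB hk0 hrow
end

section
/- Let C_q > 0 and let Q and Q̃ be m×m real symmetric positive definite matrices all of whose diagonal entries are at least C_q. Let R = diag(Q)^{−1/2} Q diag(Q)^{−1/2} and R̃ = diag(Q̃)^{−1/2} Q̃ diag(Q̃)^{−1/2}. Then ‖R − R̃‖_s ≤ ((2m+1)/C_q) · ‖Q − Q̃‖_s. -/
/-!
With `d i = Q i i ^ (-1/2)` and `r i = (Q' i i / Q i i) ^ (1/2)` one has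
`corr Q - corr Q' = D (Q - Q') D + corr Q' ⊙ (r i * r j - 1)`.
The first term has spectral norm at most `‖Q - Q'‖ / C_q`. Diagonal entries of `Q - Q'` are
bounded by `‖Q - Q'‖`, so `|r i ^ 2 - 1| ≤ ‖Q - Q'‖ / C_q`, and by AM–GM the same bound holds
for `|r i * r j - 1|`. Entries of the correlation matrix of a positive semidefinite matrix lie
in `[-1, 1]`, so the Hadamard term has entries bounded by `‖Q - Q'‖ / C_q`, hence spectral norm
at most `m` times that. Altogether the constant is `(m + 1) / C_q ≤ (2m + 1) / C_q`.
-/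

open Matrix

/-- The Euclidean norm `‖x‖₂` on `ℝ^m`. -/
noncomputable def e2 {m : ℕ} (x : Fin m → ℝ) : ℝ := Real.sqrt (∑ i, x i ^ 2)

/-- The spectral norm of a real `m × m` matrix: the operator norm induced by the
Euclidean norm, `‖M‖_s = sup_{x ≠ 0} ‖M x‖₂ / ‖x‖₂`. -/
noncomputable def specNorm {m : ℕ} (M : Matrix (Fin m) (Fin m) ℝ) : ℝ :=
  sSup ((fun x => e2 (M *ᵥ x) / e2 x) '' {x | x ≠ 0})

/-- The correlation matrix associated with a positive definite matrix `Q`: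
`corr Q = diag(Q)^{-1/2} * Q * diag(Q)^{-1/2}`. -/
noncomputable def corr {m : ℕ} (Q : Matrix (Fin m) (Fin m) ℝ) : Matrix (Fin m) (Fin m) ℝ :=
  Matrix.diagonal (fun i => (Real.sqrt (Q i i))⁻¹) * Q *
    Matrix.diagonal (fun i => (Real.sqrt (Q i i))⁻¹)

open scoped Matrix.Norms.L2Operator

lemma abs_div_sub_one_le {c δ u u' : ℝ} (hc : 0 < c) (hu : c ≤ u) (h : |u' - u| ≤ δ) :
    |u' / u - 1| ≤ δ / c := by
  have hu0 : 0 < u := hc.trans_le hu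
  rw [div_sub_one hu0.ne', abs_div, abs_of_pos hu0]
  exact div_le_div₀ ((abs_nonneg _).trans h) h hc hu

-- AM–GM: `x * y ≤ (x ^ 2 + y ^ 2) / 2`, and `x * y ≥ min x y ^ 2`.
lemma abs_mul_sub_one_le {x y t : ℝ} (hx : 0 ≤ x) (hy : 0 ≤ y)
    (hxt : |x ^ 2 - 1| ≤ t) (hyt : |y ^ 2 - 1| ≤ t) : |x * y - 1| ≤ t := by
  rw [abs_le] at *
  constructor <;> nlinarith [sq_nonneg (x - y), mul_nonneg hx hy]

lemma abs_sqrt_div_mul_sqrt_div_sub_one_le {c δ u v u' v' : ℝ} (hc : 0 < c)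
    (hu : c ≤ u) (hv : c ≤ v) (hu' : 0 ≤ u') (hv' : 0 ≤ v')
    (huu : |u' - u| ≤ δ) (hvv : |v' - v| ≤ δ) :
    |√(u' / u) * √(v' / v) - 1| ≤ δ / c := by
  refine abs_mul_sub_one_le (Real.sqrt_nonneg _) (Real.sqrt_nonneg _) ?_ ?_
  · rw [Real.sq_sqrt (div_nonneg hu' (hc.le.trans hu))]
    exact abs_div_sub_one_le hc hu huu
  · rw [Real.sq_sqrt (div_nonneg hv' (hc.le.trans hv))]
    exact abs_div_sub_one_le hc hv hvv

namespace Matrix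

lemma PosSemidef.sq_apply_le {n : Type*} {Q : Matrix n n ℝ}
    (hQ : Q.PosSemidef) (i j : n) : Q i j ^ 2 ≤ Q i i * Q j j := by
  have hdet := (hQ.submatrix ![i, j]).det_nonneg
  have hsym : Q j i = Q i j := by simpa using congrFun (congrFun hQ.1 i) j
  rw [det_fin_two] at hdet
  simp only [submatrix_apply, cons_val_zero, cons_val_one, hsym] at hdet
  nlinarith

variable {n : Type*} [Fintype n]

lemma abs_apply_le_l2_opNorm [DecidableEq n] (M : Matrix n n ℝ) (i j : n) : |M i j| ≤ ‖M‖ := by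
  have h := M.l2_opNorm_mulVec (WithLp.toLp 2 (Pi.single j 1))
  rw [mulVec_single_one, PiLp.toLp_single, PiLp.norm_single, norm_one, mul_one] at h
  calc |M i j| = ‖(WithLp.toLp 2 (M.col j)).ofLp i‖ := rfl
    _ ≤ ‖WithLp.toLp 2 (M.col j)‖ := PiLp.norm_apply_le _ _
    _ ≤ ‖M‖ := h

lemma l2_opNorm_le_card_mul [DecidableEq n]
    {M : Matrix n n ℝ} {B : ℝ} (hB : 0 ≤ B) (h : ∀ i j, |M i j| ≤ B) :
    ‖M‖ ≤ Fintype.card n * B := by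
  rw [← l2_opNorm_toEuclideanCLM]
  refine ContinuousLinearMap.opNorm_le_bound _ (by positivity) fun x => ?_
  have row_sq_le (i : n) : (M *ᵥ x.ofLp) i ^ 2 ≤ Fintype.card n * B ^ 2 * ‖x‖ ^ 2 := by
    calc (M *ᵥ x.ofLp) i ^ 2 ≤ (∑ j, M i j ^ 2) * ∑ j, x j ^ 2 :=
          Finset.sum_mul_sq_le_sq_mul_sq _ _ _
      _ ≤ (∑ _j : n, B ^ 2) * ‖x‖ ^ 2 := by
          rw [EuclideanSpace.real_norm_sq_eq]
          refine mul_le_mul_of_nonneg_right (Finset.sum_le_sum fun j _ => ?_) (by positivity)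
          exact sq_le_sq' (abs_le.mp (h i j)).1 (abs_le.mp (h i j)).2
      _ = Fintype.card n * B ^ 2 * ‖x‖ ^ 2 := by simp
  refine (sq_le_sq₀ (norm_nonneg _) (by positivity)).mp ?_
  calc ‖_‖ ^ 2 = ∑ i, (M *ᵥ x.ofLp) i ^ 2 := by
        simp [EuclideanSpace.real_norm_sq_eq]
    _ ≤ ∑ _i : n, Fintype.card n * B ^ 2 * ‖x‖ ^ 2 := Finset.sum_le_sum fun i _ => row_sq_le i
    _ = (Fintype.card n * B * ‖x‖) ^ 2 := by
        rw [Finset.sum_const, Finset.card_univ, nsmul_eq_mul]; ring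

lemma l2_opNorm_diagonal_inv_sqrt_le [DecidableEq n] {c : ℝ}
    {v : n → ℝ} (hc : 0 < c) (hv : ∀ i, c ≤ v i) :
    ‖diagonal fun i => (√(v i))⁻¹‖ ≤ (√c)⁻¹ := by
  rw [l2_opNorm_diagonal, pi_norm_le_iff_of_nonneg (by positivity)]
  intro i
  rw [Real.norm_of_nonneg (by positivity)]
  exact inv_anti₀ (Real.sqrt_pos.mpr hc) (Real.sqrt_le_sqrt (hv i))

lemma l2_opNorm_diagonal_inv_sqrt_conj_le [DecidableEq n] {c : ℝ}
    {v : n → ℝ} (hc : 0 < c) (hv : ∀ i, c ≤ v i) (A : Matrix n n ℝ) :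
    ‖diagonal (fun i => (√(v i))⁻¹) * A * diagonal fun i => (√(v i))⁻¹‖ ≤ ‖A‖ / c := by
  have hD := l2_opNorm_diagonal_inv_sqrt_le hc hv
  calc _ ≤ ‖diagonal fun i => (√(v i))⁻¹‖ * ‖A‖ * ‖diagonal fun i => (√(v i))⁻¹‖ :=
        (norm_mul_le _ _).trans (by gcongr; exact norm_mul_le _ _)
    _ ≤ (√c)⁻¹ * ‖A‖ * (√c)⁻¹ := by gcongr
    _ = ‖A‖ / c := by
        rw [mul_comm, ← mul_assoc, ← mul_inv, Real.mul_self_sqrt hc.le, inv_mul_eq_div]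

end Matrix

lemma e2_eq_norm {m : ℕ} (x : Fin m → ℝ) : e2 x = ‖WithLp.toLp 2 x‖ := by
  simp [e2, EuclideanSpace.norm_eq]

lemma specNorm_eq_l2_opNorm {m : ℕ} (M : Matrix (Fin m) (Fin m) ℝ) : specNorm M = ‖M‖ := by
  have ratio_le (x : Fin m → ℝ) : e2 (M *ᵥ x) / e2 x ≤ ‖M‖ := by
    rw [e2_eq_norm, e2_eq_norm]
    exact div_le_of_le_mul₀ (norm_nonneg _) (norm_nonneg _) (M.l2_opNorm_mulVec _)
  refine le_antisymm (Real.sSup_le (by rintro _ ⟨x, -, rfl⟩; exact ratio_le x) (norm_nonneg _)) ?_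
  have hbdd : BddAbove ((fun x => e2 (M *ᵥ x) / e2 x) '' {x | x ≠ 0}) :=
    ⟨‖M‖, by rintro _ ⟨x, -, rfl⟩; exact ratio_le x⟩
  have hnonneg : 0 ≤ specNorm M :=
    Real.sSup_nonneg <| by
      rintro _ ⟨x, -, rfl⟩
      exact div_nonneg (Real.sqrt_nonneg _) (Real.sqrt_nonneg _)
  rw [← l2_opNorm_toEuclideanCLM]
  refine ContinuousLinearMap.opNorm_le_bound _ hnonneg fun x => ?_
  rcases eq_or_ne x 0 with rfl | hx
  · simp
  have hx' : x.ofLp ≠ 0 := by simpa using hx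
  have hle : e2 (M *ᵥ x.ofLp) / e2 x.ofLp ≤ specNorm M := le_csSup hbdd ⟨x.ofLp, hx', rfl⟩
  rw [e2_eq_norm, e2_eq_norm, WithLp.toLp_ofLp, div_le_iff₀ (norm_pos_iff.mpr hx)] at hle
  rwa [← toEuclideanCLM_toLp, WithLp.toLp_ofLp] at hle

lemma corr_apply {m : ℕ} (Q : Matrix (Fin m) (Fin m) ℝ) (i j : Fin m) :
    corr Q i j = (√(Q i i))⁻¹ * Q i j * (√(Q j j))⁻¹ := by
  simp [corr, mul_diagonal, diagonal_mul]

lemma Matrix.PosSemidef.abs_corr_apply_le_one {m : ℕ} {Q : Matrix (Fin m) (Fin m) ℝ}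
    (hQ : Q.PosSemidef) (i j : Fin m) : |corr Q i j| ≤ 1 := by
  have hij : |Q i j| ≤ √(Q i i) * √(Q j j) := by
    rw [← Real.sqrt_mul hQ.diag_nonneg]
    exact Real.abs_le_sqrt (hQ.sq_apply_le i j)
  rw [corr_apply, abs_mul, abs_mul, abs_inv, abs_inv, abs_of_nonneg (Real.sqrt_nonneg _),
    abs_of_nonneg (Real.sqrt_nonneg _)]
  calc (√(Q i i))⁻¹ * |Q i j| * (√(Q j j))⁻¹
      ≤ (√(Q i i))⁻¹ * (√(Q i i) * √(Q j j)) * (√(Q j j))⁻¹ := by gcongr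
    _ = (√(Q i i))⁻¹ * √(Q i i) * (√(Q j j) * (√(Q j j))⁻¹) := by ring
    _ ≤ 1 * 1 := by gcongr <;> [exact inv_mul_le_one; exact mul_inv_le_one]
    _ = 1 := one_mul 1

lemma corr_sub_corr {m : ℕ} (Q Q' : Matrix (Fin m) (Fin m) ℝ) (hQ' : ∀ i, 0 < Q' i i) :
    corr Q - corr Q' =
      diagonal (fun i => (√(Q i i))⁻¹) * (Q - Q') * diagonal (fun i => (√(Q i i))⁻¹) +
        corr Q' ⊙ of fun i j => √(Q' i i / Q i i) * √(Q' j j / Q j j) - 1 := by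
  ext i j
  have hi := Real.sqrt_pos.mpr (hQ' i)
  have hj := Real.sqrt_pos.mpr (hQ' j)
  simp only [Matrix.sub_apply, Matrix.add_apply, hadamard_apply, of_apply, corr_apply,
    mul_diagonal, diagonal_mul, Real.sqrt_div (hQ' _).le]
  field_simp
  ring

theorem stmt6_general (m : ℕ) (Cq : ℝ) (hCq : 0 < Cq)
    (Q Q' : Matrix (Fin m) (Fin m) ℝ) (hQ' : Q'.PosDef)
    (hdQ : ∀ i, Cq ≤ Q i i) (hdQ' : ∀ i, Cq ≤ Q' i i) :
    specNorm (corr Q - corr Q') ≤ ((2 * m + 1) / Cq) * specNorm (Q - Q') := by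
  set δ := ‖Q - Q'‖
  have hdiag (i : Fin m) : |Q' i i - Q i i| ≤ δ := by
    simpa [abs_sub_comm] using abs_apply_le_l2_opNorm (Q - Q') i i
  have hentry (i j : Fin m) :
      |(corr Q' ⊙ of fun i j => √(Q' i i / Q i i) * √(Q' j j / Q j j) - 1) i j| ≤ δ / Cq := by
    rw [hadamard_apply, of_apply, abs_mul, ← one_mul (δ / Cq)]
    exact mul_le_mul (hQ'.posSemidef.abs_corr_apply_le_one i j)
      (abs_sqrt_div_mul_sqrt_div_sub_one_le hCq (hdQ i) (hdQ j) hQ'.posSemidef.diag_nonneg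
        hQ'.posSemidef.diag_nonneg (hdiag i) (hdiag j)) (abs_nonneg _) zero_le_one
  rw [specNorm_eq_l2_opNorm, specNorm_eq_l2_opNorm,
    corr_sub_corr Q Q' fun i => hCq.trans_le (hdQ' i)]
  calc _ ≤ δ / Cq + m * (δ / Cq) := norm_add_le_of_le
        (l2_opNorm_diagonal_inv_sqrt_conj_le hCq hdQ _)
        ((l2_opNorm_le_card_mul (by positivity) hentry).trans_eq (by rw [Fintype.card_fin]))
    _ ≤ (2 * m + 1) / Cq * δ := by
        rw [div_mul_eq_mul_div, mul_div_assoc]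
        nlinarith [m.cast_nonneg (α := ℝ), (by positivity : 0 ≤ δ / Cq)]

/-- If `Q, Q̃` are real symmetric positive definite with all diagonal
entries at least `C_q > 0`, and `R, R̃` are the associated correlation matrices, then
`‖R − R̃‖_s ≤ ((2m+1)/C_q) ‖Q − Q̃‖_s`. -/
theorem stmt6 (m : ℕ) (Cq : ℝ) (hCq : 0 < Cq)
    (Q Q' : Matrix (Fin m) (Fin m) ℝ) (hQ : Q.PosDef) (hQ' : Q'.PosDef)
    (hdQ : ∀ i, Cq ≤ Q i i) (hdQ' : ∀ i, Cq ≤ Q' i i) :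
    specNorm (corr Q - corr Q') ≤ ((2 * m + 1) / Cq) * specNorm (Q - Q') :=
  stmt6_general m Cq hCq Q Q' hQ' hdQ hdQ'
end

section
/- Let ν ≥ 1, let m^{(1)}, …, m^{(ν)} be real numbers with ∑_{k=1}^{ν} (m^{(k)})² < 1, let W be an m×m real symmetric positive definite matrix, and let (Q_t)_{t∈ℤ} and (S_t)_{t∈ℤ} be families of m×m real symmetric positive semidefinite matrices indexed by the integers such that Q_t = W + ∑_{k=1}^{ν} (m^{(k)})² Q_{t−k} + S_t for every t ∈ ℤ. Then for every t ∈ ℤ, the smallest eigenvalue of Q_t is at least λ₁(W) / (1 − ∑_{k=1}^{ν} (m^{(k)})²), and the i-th diagonal entry of Q_t is at least W_{ii} / (1 − ∑_{k=1}^{ν} (m^{(k)})²) for every i. -/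
/-!
If `f : ℤ → ℝ` is bounded below and `f t ≥ w + ∑ₖ aₖ f (t - k)` with `aₖ ≥ 0`, `∑ₖ aₖ < 1`,
then `α := inf f` satisfies `α ≥ w + (∑ₖ aₖ) α`, i.e. `α ≥ w / (1 - ∑ₖ aₖ)`.
In the Loewner order `Q_t ≥ W + ∑ₖ c_k² Q_{t-k}`, and both `λ₁` (via `λ₁(A) ≥ r ↔ r • 1 ≤ A`)
and the diagonal entries turn this into such a scalar inequality, with `f ≥ 0` since `Q_t ≥ 0`.
-/

open Matrix

open scoped MatrixOrder

theorem div_one_sub_sum_le_of_add_sum_mul_comp_le {X ι : Type*} [Nonempty X] [Fintype ι]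
    {f : X → ℝ} (hf : BddBelow (Set.range f)) {a : ι → ℝ} (ha : ∀ k, 0 ≤ a k)
    (hsum : ∑ k, a k < 1) {g : ι → X → X} {w : ℝ}
    (h : ∀ x, w + ∑ k, a k * f (g k x) ≤ f x) (x : X) :
    w / (1 - ∑ k, a k) ≤ f x := by
  have hinf : w + (∑ k, a k) * ⨅ y, f y ≤ ⨅ y, f y := by
    refine le_ciInf fun y => le_trans ?_ (h y)
    rw [Finset.sum_mul]
    gcongr with k
    · exact ha k
    · exact ciInf_le hf _
  calc w / (1 - ∑ k, a k) ≤ ⨅ y, f y := by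
        rw [div_le_iff₀ (by linarith)]
        linarith
    _ ≤ f x := ciInf_le hf x

namespace Matrix

variable {n : Type*}

theorem diag_mono {A B : Matrix n n ℝ} (h : A ≤ B) (i : n) : A i i ≤ B i i := by
  simpa using (le_iff.1 h).diag_nonneg (i := i)

theorem IsHermitian.algebraMap_sInf_spectrum_le [Fintype n] [DecidableEq n] {A : Matrix n n ℝ}
    (hA : A.IsHermitian) :
    algebraMap ℝ _ (sInf (spectrum ℝ A)) ≤ A :=
  (algebraMap_le_iff_le_spectrum hA.isSelfAdjoint).2 fun _ hx =>
    csInf_le finite_real_spectrum.bddBelow hx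

theorem IsHermitian.le_sInf_spectrum_iff [Fintype n] [DecidableEq n] [Nonempty n]
    {A : Matrix n n ℝ} (hA : A.IsHermitian) {r : ℝ} :
    r ≤ sInf (spectrum ℝ A) ↔ algebraMap ℝ _ r ≤ A := by
  rw [algebraMap_le_iff_le_spectrum hA.isSelfAdjoint]
  exact le_csInf_iff finite_real_spectrum.bddBelow
    (ContinuousFunctionalCalculus.spectrum_nonempty A hA.isSelfAdjoint)

end Matrix

theorem stmt11_general (m ν : ℕ) (c : Fin ν → ℝ) (hsum : ∑ k, (c k) ^ 2 < 1)
    (W : Matrix (Fin m) (Fin m) ℝ) (hW : W.PosDef)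
    (Q S : ℤ → Matrix (Fin m) (Fin m) ℝ)
    (hQ : ∀ t, (Q t).PosSemidef) (hS : ∀ t, (S t).PosSemidef)
    (hrec : ∀ t : ℤ, Q t = W + ∑ k : Fin ν, (c k) ^ 2 • Q (t - ((k : ℕ) + 1 : ℤ)) + S t) :
    ∀ t : ℤ,
      sInf (spectrum ℝ W) / (1 - ∑ k, (c k) ^ 2) ≤ sInf (spectrum ℝ (Q t)) ∧
      ∀ i, W i i / (1 - ∑ k, (c k) ^ 2) ≤ Q t i i := by
  have hc : ∀ k, 0 ≤ c k ^ 2 := fun k => sq_nonneg _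
  let shift (k : Fin ν) (t : ℤ) : ℤ := t - ((k : ℕ) + 1 : ℤ)
  have hQ_ge (t : ℤ) : W + ∑ k, (c k) ^ 2 • Q (shift k t) ≤ Q t := by
    rw [hrec t]
    exact le_add_of_nonneg_right (hS t).nonneg
  intro t
  refine ⟨?_, fun i => ?_⟩
  · rcases isEmpty_or_nonempty (Fin m) with _ | _
    -- for `m = 0` both spectra are empty and `sInf ∅ = 0`
    · simp [spectrum.of_subsingleton]
    refine div_one_sub_sum_le_of_add_sum_mul_comp_le
      (f := fun t => sInf (spectrum ℝ (Q t))) (g := shift)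
      ⟨0, ?_⟩ hc hsum (fun t => ?_) t
    · rintro _ ⟨t, rfl⟩
      exact (hQ t).isHermitian.le_sInf_spectrum_iff.2 (by simpa using (hQ t).nonneg)
    refine (hQ t).isHermitian.le_sInf_spectrum_iff.2 (le_trans ?_ (hQ_ge t))
    simp only [map_add, map_sum, map_mul, ← Algebra.smul_def]
    gcongr with k
    · exact hW.isHermitian.algebraMap_sInf_spectrum_le
    · exact (hQ _).isHermitian.algebraMap_sInf_spectrum_le
  · refine div_one_sub_sum_le_of_add_sum_mul_comp_le (f := fun t => Q t i i) (g := shift)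
      ⟨0, ?_⟩ hc hsum (fun t => ?_) t
    · rintro _ ⟨t, rfl⟩
      exact (hQ t).diag_nonneg
    simpa [Matrix.sum_apply] using diag_mono (hQ_ge t) i

/-- Let `∑_k (m^{(k)})² < 1`, let `W` be positive definite, and let
`(Q_t)_{t∈ℤ}`, `(S_t)_{t∈ℤ}` be positive semidefinite matrices with
`Q_t = W + ∑_{k=1}^ν (m^{(k)})² Q_{t−k} + S_t` for all `t`.  Then for every `t`, the
smallest eigenvalue of `Q_t` (the infimum of its real spectrum) is at least
`λ₁(W)/(1 − ∑_k (m^{(k)})²)` and `(Q_t)_{ii} ≥ W_{ii}/(1 − ∑_k (m^{(k)})²)` for every `i`. -/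
theorem stmt11 (m ν : ℕ) (hν : 1 ≤ ν) (c : Fin ν → ℝ) (hsum : ∑ k, (c k) ^ 2 < 1)
    (W : Matrix (Fin m) (Fin m) ℝ) (hW : W.PosDef)
    (Q S : ℤ → Matrix (Fin m) (Fin m) ℝ)
    (hQ : ∀ t, (Q t).PosSemidef) (hS : ∀ t, (S t).PosSemidef)
    (hrec : ∀ t : ℤ, Q t = W + ∑ k : Fin ν, (c k) ^ 2 • Q (t - ((k : ℕ) + 1 : ℤ)) + S t) :
    ∀ t : ℤ,
      sInf (spectrum ℝ W) / (1 - ∑ k, (c k) ^ 2) ≤ sInf (spectrum ℝ (Q t)) ∧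
      ∀ i, W i i / (1 - ∑ k, (c k) ^ 2) ≤ Q t i i :=
  stmt11_general m ν c hsum W hW Q S hQ hS hrec
end
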